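/- For m ≥ 2, the strong resolving graph of the odd cycle C_{2m+1} is C_{2m+1} itself: every pair of vertices at distance m in C_{2m+1} is mutually maximally distant, and these pairs form a (2m+1)-cycle. -/

import Mathlib

/-!
On `C_{2m+1}` the distance is `d(u, v) = min(k, 2m+1-k)` where `k = (v - u) mod (2m+1)`, so the
diameter is `m`. If `d(u, v) = k < m`, the neighbour of `u` just beyond the shorter `v`–`u` arc
is at distance `k + 1 ≤ m` from `v`, so `u` is maximally distant from `v` exactly when
`d(u, v) = m`. Hence the MMD pairs are the pairs with
`v - u = ±m`. Since `m · (-2) = 1` modulo `2m+1`, multiplication by `m` is a permutation of the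
vertices sending steps `±1` to steps `±m`: an isomorphism `C_{2m+1} ≃ G_SR`.
-/

open SimpleGraph

variable {V : Type*} {W : Type*}

/-- `x` lies on some `y`–`z` geodesic in `G`. -/
def LiesOnGeodesic (G : SimpleGraph V) (x y z : V) : Prop :=
  G.dist y x + G.dist x z = G.dist y z

/-- A strong resolving set of `G`. -/
def IsStrongResolvingSet (G : SimpleGraph V) (S : Set V) : Prop :=
  ∀ x y : V, x ≠ y → ∃ z ∈ S,
    LiesOnGeodesic G x y z ∨ LiesOnGeodesic G y x z

/-- The strong metric dimension of a finite graph. -/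
noncomputable def sdim (G : SimpleGraph V) [Fintype V] : ℕ :=
  sInf {n : ℕ | ∃ S : Finset V, S.card = n ∧ IsStrongResolvingSet G ↑S}

/-- `u` is maximally distant from `v` in `G`. -/
def MaxDistFrom (G : SimpleGraph V) (u v : V) : Prop :=
  ∀ w : V, G.Adj u w → G.dist w v ≤ G.dist u v

/-- `u` and `v` are mutually maximally distant in `G`. -/
def MutMaxDist (G : SimpleGraph V) (u v : V) : Prop :=
  MaxDistFrom G u v ∧ MaxDistFrom G v u

/-- The strong resolving graph of `G` (on the full vertex set; vertices not in
any MMD pair are isolated). -/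
def srGraph (G : SimpleGraph V) : SimpleGraph V where
  Adj u v := u ≠ v ∧ MutMaxDist G u v
  symm := by
    constructor
    rintro u v ⟨h, h1, h2⟩
    exact ⟨h.symm, h2, h1⟩
  loopless := by constructor; rintro v ⟨h, -⟩; exact h rfl

/-- The cycle graph on `n` vertices (`n ≥ 3`), as a graph on `Fin n`. -/
def cycGraph (n : ℕ) : SimpleGraph (Fin n) where
  Adj i j := i ≠ j ∧ ((i.val + 1) % n = j.val ∨ (j.val + 1) % n = i.val)
  symm := by
    constructor
    rintro i j ⟨h, h'⟩
    exact ⟨h.symm, h'.symm⟩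
  loopless := by constructor; rintro i ⟨h, -⟩; exact h rfl

open scoped Fin.CommRing

namespace SimpleGraph

variable {G : SimpleGraph V}

theorem Walk.apply_le_apply_add_length {f : V → ℕ} (hf : ∀ x y, G.Adj x y → f x ≤ f y + 1)
    {u v : V} (p : G.Walk u v) : f u ≤ f v + p.length := by
  induction p with
  | nil => simp
  | cons h _ ih => rw [Walk.length_cons]; have := hf _ _ h; omega

theorem Reachable.apply_le_apply_add_dist {f : V → ℕ} (hf : ∀ x y, G.Adj x y → f x ≤ f y + 1)
    {u v : V} (h : G.Reachable u v) : f u ≤ f v + G.dist u v := by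
  obtain ⟨p, hp⟩ := h.exists_walk_length_eq_dist
  exact hp ▸ p.apply_le_apply_add_length hf

end SimpleGraph

theorem maxDistFrom_of_dist_eq {G : SimpleGraph V} {D : ℕ} (hD : ∀ x y, G.dist x y ≤ D)
    {u v : V} (h : G.dist u v = D) : MaxDistFrom G u v :=
  fun w _ => h ▸ hD w v

namespace Fin

variable {n : ℕ}

def cycNorm (a : Fin n) : ℕ := min a.val (-a).val

theorem cycNorm_neg (a : Fin n) : (-a).cycNorm = a.cycNorm := by
  rw [cycNorm, cycNorm, neg_neg, min_comm]

@[simp] theorem cycNorm_zero : (0 : Fin (n + 1)).cycNorm = 0 := by simp [cycNorm]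

theorem cycNorm_eq (a : Fin (n + 1)) : a.cycNorm = min a.val (n + 1 - a.val) := by
  rw [cycNorm, val_neg]
  split_ifs with h
  · simp [h]
  · rfl

theorem cycNorm_add_one_le (a : Fin (n + 1)) : (a + 1).cycNorm ≤ a.cycNorm + 1 := by
  have ha := a.isLt
  rw [cycNorm_eq, cycNorm_eq, val_add_one]
  split_ifs with h
  · rw [h, val_last]; omega
  · omega

theorem cycNorm_sub_one_le (a : Fin (n + 1)) : (a - 1).cycNorm ≤ a.cycNorm + 1 := by
  rw [← cycNorm_neg, neg_sub', sub_neg_eq_add, ← cycNorm_neg a]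
  exact cycNorm_add_one_le (-a)

end Fin

section CycleDistance

variable {n : ℕ}

theorem cycGraph_adj_iff (hn : 0 < n) {i j : Fin (n + 1)} :
    (cycGraph (n + 1)).Adj i j ↔ j - i = 1 ∨ i - j = 1 := by
  have hone : (1 : Fin (n + 1)).val = 1 := by rw [Fin.val_one', Nat.mod_eq_of_lt (by omega)]
  have hsub : ∀ x y : Fin (n + 1), y - x = 1 ↔ (x.val + 1) % (n + 1) = y.val := fun x y => by
    rw [sub_eq_iff_eq_add', Fin.ext_iff, Fin.val_add, hone, eq_comm]
  change i ≠ j ∧ _ ↔ _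
  rw [← hsub, ← hsub]
  refine ⟨And.right, fun h => ⟨?_, h⟩⟩
  rintro rfl
  rw [sub_self, or_self, Fin.ext_iff, hone] at h
  exact absurd h (by simp)

theorem cycGraph_adj_add_one (hn : 0 < n) (i : Fin (n + 1)) : (cycGraph (n + 1)).Adj i (i + 1) :=
  (cycGraph_adj_iff hn).2 (Or.inl (add_sub_cancel_left i 1))

theorem cycGraph_exists_walk_length (hn : 0 < n) (u : Fin (n + 1)) :
    ∀ k : ℕ, ∃ p : (cycGraph (n + 1)).Walk u (u + (k : Fin (n + 1))), p.length = k
  | 0 => ⟨Walk.nil.copy rfl (by simp), by simp⟩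
  | k + 1 => by
    obtain ⟨p, hp⟩ := cycGraph_exists_walk_length hn u k
    exact ⟨(p.concat (cycGraph_adj_add_one hn _)).copy rfl (by push_cast; ring), by simp [hp]⟩

theorem cycGraph_exists_walk_length_eq_val_sub (hn : 0 < n) (u v : Fin (n + 1)) :
    ∃ p : (cycGraph (n + 1)).Walk u v, p.length = (v - u).val := by
  obtain ⟨p, hp⟩ := cycGraph_exists_walk_length hn u (v - u).val
  exact ⟨p.copy rfl (by rw [Fin.cast_val_eq_self, add_sub_cancel]), by simp [hp]⟩

theorem cycGraph_dist (hn : 0 < n) (u v : Fin (n + 1)) :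
    (cycGraph (n + 1)).dist u v = (v - u).cycNorm := by
  have hle : ∀ x y : Fin (n + 1), (cycGraph (n + 1)).dist x y ≤ (y - x).val := fun x y => by
    obtain ⟨p, hp⟩ := cycGraph_exists_walk_length_eq_val_sub hn x y
    exact hp ▸ dist_le p
  refine le_antisymm (le_min (hle u v) ?_) ?_
  · rw [neg_sub, dist_comm]
    exact hle v u
  · obtain ⟨p, -⟩ := cycGraph_exists_walk_length_eq_val_sub hn u v
    have hlip : ∀ x y, (cycGraph (n + 1)).Adj x y → (v - x).cycNorm ≤ (v - y).cycNorm + 1 := by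
      intro x y hxy
      rcases (cycGraph_adj_iff hn).1 hxy with h | h
      · rw [show v - x = v - y + (y - x) by abel, h]
        exact Fin.cycNorm_add_one_le _
      · rw [show v - x = v - y - (x - y) by abel, h]
        exact Fin.cycNorm_sub_one_le _
    simpa using p.reachable.apply_le_apply_add_dist hlip

end CycleDistance

section OddCycle

variable {m : ℕ}

theorem Fin.cycNorm_le_half (a : Fin (2 * m + 1)) : a.cycNorm ≤ m := by
  rw [Fin.cycNorm_eq]
  omega

theorem Fin.cycNorm_eq_half_iff (a : Fin (2 * m + 1)) : a.cycNorm = m ↔ a = m ∨ -a = m := by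
  have ha := a.isLt
  have hm : ((m : Fin (2 * m + 1)) : ℕ) = m := by rw [Fin.val_natCast, Nat.mod_eq_of_lt (by omega)]
  rw [cycNorm, Fin.ext_iff, Fin.ext_iff, hm, val_neg]
  split_ifs with h
  · simp [h]
  · omega

theorem Fin.cycNorm_add_one_of_val_lt {a : Fin (2 * m + 1)} (h : a.val < m) :
    (a + 1).cycNorm = a.cycNorm + 1 := by
  rw [cycNorm_eq, cycNorm_eq, val_add_one_of_lt (by rw [lt_def, val_last]; omega)]
  omega

theorem Fin.cycNorm_add_one_or_sub_one {a : Fin (2 * m + 1)} (h : a.cycNorm < m) :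
    (a + 1).cycNorm = a.cycNorm + 1 ∨ (a - 1).cycNorm = a.cycNorm + 1 := by
  rcases min_lt_iff.1 h with h | h
  · exact Or.inl (cycNorm_add_one_of_val_lt h)
  · right
    rw [← cycNorm_neg, neg_sub', sub_neg_eq_add, ← cycNorm_neg a]
    exact cycNorm_add_one_of_val_lt h

theorem maxDistFrom_cycGraph_iff (hm : 0 < m) {u v : Fin (2 * m + 1)} :
    MaxDistFrom (cycGraph (2 * m + 1)) u v ↔ (cycGraph (2 * m + 1)).dist u v = m := by
  have hn : 0 < 2 * m := by omega
  refine ⟨fun hmax => ?_, maxDistFrom_of_dist_eq fun x y => ?_⟩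
  · by_contra hne
    rw [cycGraph_dist hn] at hne
    obtain ⟨w, huw, hfar⟩ : ∃ w, (cycGraph (2 * m + 1)).Adj u w ∧
        (v - w).cycNorm = (v - u).cycNorm + 1 := by
      rcases Fin.cycNorm_add_one_or_sub_one (lt_of_le_of_ne (Fin.cycNorm_le_half _) hne) with h | h
      · exact ⟨u - 1, (cycGraph_adj_iff hn).2 (Or.inr (sub_sub_cancel u 1)),
          by rw [show v - (u - 1) = v - u + 1 by abel, h]⟩
      · exact ⟨u + 1, cycGraph_adj_add_one hn u, by rw [show v - (u + 1) = v - u - 1 by abel, h]⟩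
    have := hmax w huw
    rw [cycGraph_dist hn, cycGraph_dist hn, hfar] at this
    omega
  · rw [cycGraph_dist hn]
    exact Fin.cycNorm_le_half _

theorem srGraph_cycGraph_adj_iff (hm : 0 < m) {u v : Fin (2 * m + 1)} :
    (srGraph (cycGraph (2 * m + 1))).Adj u v ↔ (cycGraph (2 * m + 1)).dist u v = m := by
  change u ≠ v ∧ MaxDistFrom _ u v ∧ MaxDistFrom _ v u ↔ _
  rw [maxDistFrom_cycGraph_iff hm, maxDistFrom_cycGraph_iff hm, dist_comm, and_self]
  refine ⟨And.right, fun h => ⟨?_, h⟩⟩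
  rintro rfl
  rw [dist_self] at h
  omega

theorem Fin.natCast_mul_neg_two (m : ℕ) : (m : Fin (2 * m + 1)) * -2 = 1 := by
  have h : ((2 * m + 1 : ℕ) : Fin (2 * m + 1)) = 0 := Fin.natCast_self _
  push_cast at h
  linear_combination -h

def Fin.natCastUnit (m : ℕ) : (Fin (2 * m + 1))ˣ where
  val := m
  inv := -2
  val_inv := Fin.natCast_mul_neg_two m
  inv_val := (mul_comm _ _).trans (Fin.natCast_mul_neg_two m)

def cycGraphIsoSrGraph (hm : 0 < m) : cycGraph (2 * m + 1) ≃g srGraph (cycGraph (2 * m + 1)) where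
  toEquiv := Units.mulLeft (Fin.natCastUnit m)
  map_rel_iff' {x y} := by
    have hm1 : (m : Fin (2 * m + 1)) = Fin.natCastUnit m * 1 := (mul_one _).symm
    change (srGraph _).Adj (Fin.natCastUnit m * x) (Fin.natCastUnit m * y) ↔ _
    rw [srGraph_cycGraph_adj_iff hm, cycGraph_dist (by omega), Fin.cycNorm_eq_half_iff, neg_sub,
      ← mul_sub, ← mul_sub, hm1, Units.mul_right_inj, Units.mul_right_inj, cycGraph_adj_iff (by omega)]

end OddCycle

theorem srGraph_odd_cycle (m : ℕ) (hm : 2 ≤ m) :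
    (∀ u v : Fin (2 * m + 1), (srGraph (cycGraph (2 * m + 1))).Adj u v ↔
      (cycGraph (2 * m + 1)).dist u v = m) ∧
    Nonempty (srGraph (cycGraph (2 * m + 1)) ≃g cycGraph (2 * m + 1)) :=
  ⟨fun _ _ => srGraph_cycGraph_adj_iff (by omega), ⟨(cycGraphIsoSrGraph (by omega)).symm⟩⟩
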